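/- arXiv:1503.07403 — 15 statements merged into one kernel-verified Lean document; each statement's English description precedes it below -/
import Mathlib

section
/- If S is a magma whose multiplication is given by x·y = (αx)*y, where (S,*) is a semigroup and α is an involutive automorphism of (S,*), then S is a right-Bol magma, i.e., ((x·y)·z)·w = x·((y·z)·w) for all x,y,z,w in S. -/
/-- If S is a magma with x·y = (αx)*y for a semigroup (S,*) and an involutive
automorphism α of (S,*), then S is right-Bol: ((xy)z)w = x((yz)w). -/
theorem stmt_1 {S : Type*} (star : S → S → S) (α : S → S)
    (hassoc : ∀ x y z, star (star x y) z = star x (star y z))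
    (hinv : ∀ x, α (α x) = x)
    (hhom : ∀ x y, α (star x y) = star (α x) (α y))
    (mul : S → S → S)
    (hmul : ∀ x y, mul x y = star (α x) y) :
    ∀ x y z w, mul (mul (mul x y) z) w = mul x (mul (mul y z) w) := by
  intro x y z w
  simp only [hmul, hhom, hinv, hassoc]
end

section
/- Let S be a magma with product · and let α be an involutive bijection of S such that for all x,y,z: (x·y)·z = (αx)·(y·z) = x·(y·z), and x·(αx) = αx for all x. Then every element of S is idempotent (S is a band, i.e., an idempotent semigroup). -/
/-- If α is an involutive bijection of a magma S with (xy)z = (αx)(yz) = x(yz)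
and x(αx) = αx, then every element of S is idempotent. -/
theorem stmt_3 {S : Type*} (mul : S → S → S) (α : S → S)
    (hinv : ∀ x, α (α x) = x)
    (h1 : ∀ x y z, mul (mul x y) z = mul (α x) (mul y z))
    (h2 : ∀ x y z, mul (mul x y) z = mul x (mul y z))
    (h3 : ∀ x, mul x (α x) = α x) :
    ∀ x, mul x x = x := by
  have key : ∀ x y z, mul (α x) (mul y z) = mul x (mul y z) := fun x y z =>
    (h1 x y z).symm.trans (h2 x y z)
  intro x
  -- αx · x = x, from h3 applied to αx
  have hax : mul (α x) x = x := by
    have := h3 (α x); rwa [hinv] at this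
  -- x · x = x · (αx · x) = αx · (αx · x) = αx · x = x
  calc mul x x = mul x (mul (α x) x) := by rw [hax]
    _ = mul (α x) (mul (α x) x) := (key x (α x) x).symm
    _ = mul (α x) x := by conv_lhs => rw [hax]
    _ = x := hax
end

section
/- Let S be a magma with an involutive bijection α such that (x·y)·z = (αx)·(y·z) = x·(y·z) for all x,y,z and x·(αx) = αx for all x. Then α is an automorphism of S if and only if α is a left translation, i.e., α(x·y) = x·(αy) for all x,y. -/
/-- Under the hypotheses (xy)z = (αx)(yz) = x(yz), x(αx) = αx and α² = id,
α is an automorphism of S iff α is a left translation. -/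
theorem stmt_4 {S : Type*} (mul : S → S → S) (α : S → S)
    (hinv : ∀ x, α (α x) = x)
    (h1 : ∀ x y z, mul (mul x y) z = mul (α x) (mul y z))
    (h2 : ∀ x y z, mul (mul x y) z = mul x (mul y z))
    (h3 : ∀ x, mul x (α x) = α x) :
    (∀ x y, α (mul x y) = mul (α x) (α y)) ↔ (∀ x y, α (mul x y) = mul x (α y)) := by
  have key : ∀ x y, mul (α x) (α y) = mul x (α y) := by
    intro x y
    calc mul (α x) (α y) = mul (α x) (mul y (α y)) := by rw [h3]
      _ = mul (mul x y) (α y) := (h1 x y (α y)).symm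
      _ = mul x (mul y (α y)) := h2 x y (α y)
      _ = mul x (α y) := by rw [h3]
  constructor <;> intro h x y <;> rw [h x y, key]
end

section
/- Let S be a magma and α an involutive bijection with x·(αx) = αx for all x and α a left translation (α(xy) = x(αy) for all x,y). Then x = x·x for all x in S. If moreover (x·y)·z = (αx)·(y·z) for all x,y,z, then α is an automorphism of S with α² = id. -/
/-- If α is an involutive left-translation bijection with x(αx) = αx for all x,
then x = x² for all x; if moreover (xy)z = (αx)(yz), then α is an automorphism. -/
theorem stmt_5 {S : Type*} (mul : S → S → S) (α : S → S)
    (hinv : ∀ x, α (α x) = x)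
    (h3 : ∀ x, mul x (α x) = α x)
    (hLT : ∀ x y, α (mul x y) = mul x (α y)) :
    (∀ x, x = mul x x) ∧
      ((∀ x y z, mul (mul x y) z = mul (α x) (mul y z)) →
        ∀ x y, α (mul x y) = mul (α x) (α y)) := by
  have idem : ∀ x, x = mul x x := by
    intro x
    have h := congrArg α (h3 x)
    rw [hLT, hinv] at h
    exact h.symm
  have e2' : ∀ x, mul (α x) x = x := by
    intro x
    have h := h3 (α x)
    rwa [hinv] at h
  refine ⟨idem, fun hassoc x y => ?_⟩
  have K : ∀ x y, mul (mul x y) y = mul x y := by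
    intro x y
    calc mul (mul x y) y
        = mul (α (α (mul x y))) y := by rw [hinv]
      _ = mul (α (mul x (α y))) y := by rw [hLT]
      _ = mul (α (mul x (α y))) (mul y y) := by rw [← idem]
      _ = mul (mul (mul x (α y)) y) y := (hassoc _ y y).symm
      _ = mul (mul (α x) (mul (α y) y)) y := by rw [hassoc x (α y) y]
      _ = mul (α (α x)) (mul (mul (α y) y) y) := hassoc _ _ y
      _ = mul x (mul y y) := by rw [hinv, e2']
      _ = mul x y := by rw [← idem]
  have L : ∀ x y, mul (α x) y = mul x y := by
    intro x y
    calc mul (α x) y = mul (α x) (mul y y) := by rw [← idem]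
      _ = mul (mul x y) y := (hassoc x y y).symm
      _ = mul x y := K x y
  rw [hLT, ← L x (α y)]
end

section
/- Let S be a magma and α an involutive bijection of S with x·(αx) = αx for all x and (x·y)·z = (αx)·(y·z) = x·(y·z) for all x,y,z. Then α is a right translation (α(xy) = (αx)y for all x,y) if and only if α is the identity map. -/
/-- Under x(αx) = αx and (xy)z = (αx)(yz) = x(yz), the involutive bijection α is
a right translation iff α is the identity map. -/
theorem stmt_6 {S : Type*} (mul : S → S → S) (α : S → S)
    (hinv : ∀ x, α (α x) = x)
    (h3 : ∀ x, mul x (α x) = α x)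
    (h1 : ∀ x y z, mul (mul x y) z = mul (α x) (mul y z))
    (h2 : ∀ x y z, mul (mul x y) z = mul x (mul y z)) :
    (∀ x y, α (mul x y) = mul (α x) y) ↔ (∀ x, α x = x) := by
  constructor
  · intro hrt x
    -- (αx)x = x : from h3 at αx and hinv
    have hax : mul (α x) x = x := by
      have := h3 (α x); rwa [hinv] at this
    -- (αx)(αx) = x : α(x·αx) = (αx)(αx) and α(x·αx) = α(αx) = x
    have haa : mul (α x) (α x) = x := by
      have := hrt x (α x); rw [h3, hinv] at this; exact this.symm
    -- x·x = x
    have hxx : mul x x = x := by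
      have : mul (mul x (α x)) (α x) = mul x (mul (α x) (α x)) := h2 x (α x) (α x)
      rw [h3, haa] at this; exact this.symm
    -- αx = α(x·x) = (αx)·x = x
    have := hrt x x
    rw [hxx, hax] at this
    exact this
  · intro hid x y
    rw [hid, hid]
end

section
/- Let S be a magma satisfying x = x·x for all x, and let α be an involutive bijection of S such that (x·y)·z = (αx)·(y·z) for all x,y,z. Then x·(αx) = αx for all x in S. -/
/-- If S satisfies x = x² and α is an involutive bijection with (xy)z = (αx)(yz),
then x(αx) = αx for all x. -/
theorem stmt_7 {S : Type*} (mul : S → S → S) (α : S → S)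
    (hidem : ∀ x, mul x x = x)
    (hinv : ∀ x, α (α x) = x)
    (h1 : ∀ x y z, mul (mul x y) z = mul (α x) (mul y z)) :
    ∀ x, mul x (α x) = α x := by
  have key : ∀ x, mul (α x) x = x := by
    intro x
    have := h1 x x x
    rw [hidem, hidem] at this
    exact this.symm
  intro x
  have := key (α x)
  rwa [hinv] at this
end

section
/- If a magma S has multiplication x·y = (αx)*y where (S,*) is a semilattice of groups (a Clifford semigroup: an inverse semigroup that is a union of groups) and α is an involutive automorphism of (S,*) fixing all idempotents, then S is a completely inverse magma: every a in S has a unique element a⁻¹ with (a·a⁻¹)·a = a and (a⁻¹·a)·a⁻¹ = a⁻¹, and moreover a·a⁻¹ = a⁻¹·a is idempotent in S. -/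
/-- If x·y = (αx)*y where (S,*) is a semilattice of groups (completely regular
semigroup with central idempotents) and α is an involutive idempotent-fixed
automorphism of (S,*), then S is a completely inverse magma. -/
theorem stmt_10 {S : Type*}
(star : S → S → S) (α : S → S)
    (hassoc : ∀ x y z, star (star x y) z = star x (star y z))
    (hCR : ∀ a, ∃ x, star (star a x) a = a ∧ star a x = star x a)
    (hcentral : ∀ e, star e e = e → ∀ x, star e x = star x e)
    (hinv : ∀ x, α (α x) = x)
    (hhom : ∀ x y, α (star x y) = star (α x) (α y))
    (hfix : ∀ e, star e e = e → α e = e)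
    (mul : S → S → S)
    (hmul : ∀ x y, mul x y = star (α x) y) :
    ∀ a : S, ∃ b : S,
      (mul (mul a b) a = a ∧ mul (mul b a) b = b) ∧
      (∀ c, mul (mul a c) a = a → mul (mul c a) c = c → c = b) ∧
      mul a b = mul b a ∧ mul (mul a b) (mul a b) = mul a b := by
  intro a
  obtain ⟨x, h1, h2⟩ := hCR a
  obtain ⟨e, he⟩ : ∃ e, e = star a x := ⟨_, rfl⟩
  obtain ⟨d, hd⟩ : ∃ d, d = star (star x a) x := ⟨_, rfl⟩
  have hee : star e e = e := by rw [he, ← hassoc, h1]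
  have had : star a d = e := by rw [hd, he, ← hassoc, ← hassoc, h1]
  have hxaxa : star (star x a) (star x a) = star x a := by
    rw [← h2, ← he]; exact hee
  have hda : star d a = e := by rw [hd, hassoc, hxaxa, ← h2, he]
  have hed : star e d = d := by rw [he, h2, hd, ← hassoc, hxaxa]
  have hea : star e a = a := by rw [he]; exact h1
  have hde : star d e = d := by rw [← hcentral e hee d]; exact hed
  have hada : star (star a d) a = a := by rw [had]; exact hea
  have hab : mul a (α d) = e := by rw [hmul, ← hhom, had, hfix e hee]
  have hba : mul (α d) a = e := by rw [hmul, hinv, hda]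
  refine ⟨α d, ⟨?_, ?_⟩, ?_, ?_, ?_⟩
  · rw [hab, hmul, hfix e hee]; exact hea
  · rw [hba, hmul, hfix e hee, ← hfix e hee, ← hhom, hed]
  · -- uniqueness
    intro c H1 H2
    rw [hmul, hmul, hhom, hinv] at H1
    have h := congrArg α H2
    rw [hmul, hmul, hhom, hinv] at h
    obtain ⟨d', hd'⟩ : ∃ t, t = α c := ⟨_, rfl⟩
    rw [← hd'] at H1 h
    -- H1 : star (star a d') a = a ; h : star (star d' a) d' = d'
    have hc : c = α d' := by rw [hd', hinv]
    have he1 : star (star a d') (star a d') = star a d' := by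
      rw [hassoc, ← hassoc d' a d', h]
    have key1 : d = star d (star a d') := by
      calc d = star d e := hde.symm
        _ = star d (star a d) := by rw [had]
        _ = star d (star (star (star a d') a) d) := by rw [H1]
        _ = star d (star (star a d') (star a d)) := by rw [hassoc (star a d') a d]
        _ = star d (star (star a d) (star a d')) := by rw [hcentral (star a d') he1 (star a d)]
        _ = star (star d (star a d)) (star a d') := by rw [hassoc d (star a d) (star a d')]
        _ = star d (star a d') := by rw [had, hde]
    have key2 : d' = star d (star a d') := by
      calc d' = star (star d' a) d' := h.symm
        _ = star (star d' (star e a)) d' := by rw [hea]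
        _ = star (star (star d' e) a) d' := by rw [hassoc d' e a]
        _ = star (star (star e d') a) d' := by rw [hcentral e hee d']
        _ = star (star e (star d' a)) d' := by rw [hassoc e d' a]
        _ = star e (star (star d' a) d') := by rw [hassoc]
        _ = star e d' := by rw [h]
        _ = star (star d a) d' := by rw [hda]
        _ = star d (star a d') := by rw [hassoc]
    rw [hc, key2, ← key1]
  · rw [hab, hba]
  · rw [hab, hmul, hfix e hee]; exact hee
end

section
/- If a magma S has multiplication x·y = (αx)*y where (S,*) is a semilattice of groups and α is an involutive idempotent-fixed automorphism of (S,*), then for all a,b in S: (a·b)⁻¹ = (αb⁻¹)·(αa⁻¹), where x⁻¹ denotes the unique inverse in the completely inverse magma S. -/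
/-- Under the semilattice-of-groups hypotheses, (ab)⁻¹ = (αb⁻¹)(αa⁻¹), where
x⁻¹ is the unique inverse in the completely inverse magma S. -/
theorem stmt_12 {S : Type*}
(star : S → S → S) (α : S → S)
    (hassoc : ∀ x y z, star (star x y) z = star x (star y z))
    (hCR : ∀ a, ∃ x, star (star a x) a = a ∧ star a x = star x a)
    (hcentral : ∀ e, star e e = e → ∀ x, star e x = star x e)
    (hinv : ∀ x, α (α x) = x)
    (hhom : ∀ x y, α (star x y) = star (α x) (α y))
    (hfix : ∀ e, star e e = e → α e = e)
    (mul : S → S → S)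
    (hmul : ∀ x y, mul x y = star (α x) y)
(inv : S → S)
    (hinvp : ∀ a, mul (mul a (inv a)) a = a ∧ mul (mul (inv a) a) (inv a) = inv a)
    (huniq : ∀ a b, mul (mul a b) a = a → mul (mul b a) b = b → b = inv a) :
    ∀ a b, inv (mul a b) = mul (α (inv b)) (α (inv a)) := by
  -- star-level inverse properties of α (inv a)
  have sinv1 : ∀ a, star (star a (α (inv a))) a = a := by
    intro a
    have h := (hinvp a).1
    rw [hmul, hmul] at h
    simp only [hhom, hinv] at h
    exact h
  have sinv2 : ∀ a, star (star (α (inv a)) a) (α (inv a)) = α (inv a) := by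
    intro a
    have h := (hinvp a).2
    rw [hmul, hmul] at h
    simp only [hhom, hinv] at h
    -- h : star (star (inv a) (α a)) (inv a) = inv a
    have h2 := congrArg α h
    simp only [hhom, hinv] at h2
    exact h2
  have uniq : ∀ a c, star (star a c) a = a → star (star c a) c = c → c = α (inv a) := by
    intro a c h1 h2
    have key : α c = inv a := by
      apply huniq
      · rw [hmul, hmul]
        simp only [hhom, hinv]
        exact h1
      · rw [hmul, hmul]
        simp only [hhom, hinv]
        have := congrArg α h2
        simp only [hhom] at this
        exact this
    rw [← key, hinv]
  -- product of inverses at star level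
  have prod : ∀ A B C D, star (star A C) A = A → star (star C A) C = C →
      star (star B D) B = B → star (star D B) D = D →
      star (star (star A B) (star D C)) (star A B) = star A B ∧
      star (star (star D C) (star A B)) (star D C) = star D C := by
    intro A B C D hACA hCAC hBDB hDBD
    have hbd : star (star B D) (star B D) = star B D := by
      rw [← hassoc, hBDB]
    have hca : star (star C A) (star C A) = star C A := by
      rw [← hassoc, hCAC]
    have cbd := hcentral _ hbd
    constructor
    · calc star (star (star A B) (star D C)) (star A B)
          = star A (star (star (star B D) (star C A)) B) := by
            simp only [hassoc]
        _ = star A (star (star (star C A) (star B D)) B) := by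
            rw [cbd (star C A)]
        _ = star A (star (star C A) (star (star B D) B)) := by rw [hassoc]
        _ = star A (star (star C A) B) := by rw [hBDB]
        _ = star (star (star A C) A) B := by simp only [hassoc]
        _ = star A B := by rw [hACA]
    · calc star (star (star D C) (star A B)) (star D C)
          = star D (star (star (star C A) (star B D)) C) := by
            simp only [hassoc]
        _ = star D (star (star (star B D) (star C A)) C) := by
            rw [← cbd (star C A)]
        _ = star D (star (star B D) (star (star C A) C)) := by rw [hassoc]
        _ = star D (star (star B D) C) := by rw [hCAC]
        _ = star (star (star D B) D) C := by simp only [hassoc]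
        _ = star D C := by rw [hDBD]
  intro a b
  -- inverse of α a is inv a
  have h1 : star (star (α a) (inv a)) (α a) = α a := by
    have := congrArg α (sinv1 a)
    simp only [hhom, hinv] at this
    exact this
  have h2 : star (star (inv a) (α a)) (inv a) = inv a := by
    have := congrArg α (sinv2 a)
    simp only [hhom, hinv] at this
    exact this
  -- inverse of b is α (inv b)
  have h3 := sinv1 b
  have h4 := sinv2 b
  obtain ⟨p1, p2⟩ := prod (α a) b (inv a) (α (inv b)) h1 h2 h3 h4
  have key := uniq (star (α a) b) (star (α (inv b)) (inv a)) p1 p2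
  -- key : star (α (inv b)) (inv a) = α (inv (star (α a) b))
  have key2 := congrArg α key
  simp only [hhom, hinv] at key2
  -- key2 : star (inv b) (α (inv a)) = inv (star (α a) b)
  rw [hmul, hmul, hinv, ← key2]
end

section
/- If a magma S has multiplication x·y = (αx)*y where (S,*) is a semilattice of groups and α is an involutive idempotent-fixed automorphism of (S,*), then αa = a·(a⁻¹·a) = a·(a·a⁻¹), a²·a⁻¹ = a, and (αa)⁻¹ = α(a⁻¹), for all a in S. -/
/-- Under the semilattice-of-groups hypotheses: αa = a(a⁻¹a) = a(aa⁻¹),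
a²a⁻¹ = a and (αa)⁻¹ = α(a⁻¹). -/
theorem stmt_13 {S : Type*}
(star : S → S → S) (α : S → S)
    (hassoc : ∀ x y z, star (star x y) z = star x (star y z))
    (hCR : ∀ a, ∃ x, star (star a x) a = a ∧ star a x = star x a)
    (hcentral : ∀ e, star e e = e → ∀ x, star e x = star x e)
    (hinv : ∀ x, α (α x) = x)
    (hhom : ∀ x y, α (star x y) = star (α x) (α y))
    (hfix : ∀ e, star e e = e → α e = e)
    (mul : S → S → S)
    (hmul : ∀ x y, mul x y = star (α x) y)
(inv : S → S)
    (hinvp : ∀ a, mul (mul a (inv a)) a = a ∧ mul (mul (inv a) a) (inv a) = inv a)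
    (huniq : ∀ a b, mul (mul a b) a = a → mul (mul b a) b = b → b = inv a) :
    ∀ a, α a = mul a (mul (inv a) a) ∧ α a = mul a (mul a (inv a)) ∧
      mul (mul a a) (inv a) = a ∧ inv (α a) = α (inv a) := by
  have αinj : ∀ p q, α p = α q → p = q := fun p q h => by
    have h2 := congrArg α h
    rwa [hinv, hinv] at h2
  intro a
  obtain ⟨x, hx1, hx2⟩ := hCR a
  -- e := star a x is idempotent; c := star x (star a x) is the star-inverse of a
  have he : star (star a x) (star a x) = star a x := by
    rw [← hassoc, hx1]
  have hcent := hcentral (star a x) he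
  have hac : star a (star x (star a x)) = star a x := by
    rw [← hassoc]; exact he
  have hca : star (star x (star a x)) a = star a x := by
    rw [hassoc, hx1, ← hx2]
  have hec : star (star a x) (star x (star a x)) = star x (star a x) := by
    rw [hcent, hassoc, he]
  have hae : star a (star a x) = a := by
    rw [hx2, ← hassoc, hx1]
  have hαae : star (α a) (star a x) = α a := by
    apply αinj
    rw [hhom, hinv, hfix (star a x) he, hae]
  have H1 : mul (mul a (α (star x (star a x)))) a = a := by
    rw [hmul, hmul, hhom, hinv, hinv, hassoc, hca, hae]
  have H2 : mul (mul (α (star x (star a x))) a) (α (star x (star a x)))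
      = α (star x (star a x)) := by
    rw [hmul, hmul, hinv, hca, hfix (star a x) he]
    apply αinj
    rw [hhom, hfix (star a x) he, hinv]
    exact hec
  have hinva : inv a = α (star x (star a x)) := (huniq a _ H1 H2).symm
  refine ⟨?_, ?_, ?_, ?_⟩
  · rw [hmul, hmul, hinva, hinv, hca]
    exact hαae.symm
  · rw [hmul, hmul, hinva, ← hhom, hac, hfix (star a x) he]
    exact hαae.symm
  · rw [hmul, hmul, hinva, hhom, hinv, hassoc, ← hhom, hac, hfix (star a x) he, hae]
  · have K1 : mul (mul (α a) (star x (star a x))) (α a) = α a := by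
      rw [hmul, hmul, hinv, hac, hfix (star a x) he, hcent]
      exact hαae
    have K2 : mul (mul (star x (star a x)) (α a)) (star x (star a x))
        = star x (star a x) := by
      rw [hmul, hmul, ← hhom, hinv, hca]
      exact hec
    rw [hinva, hinv]
    exact (huniq (α a) _ K1 K2).symm
end

section
/- If a magma S has multiplication x·y = (αx)*y where (S,*) is a semilattice of groups and α is an involutive idempotent-fixed automorphism of (S,*), then for every idempotent e of S and all a,b in S: e·a = (αa)·e and e·(a·b) = (e·a)·(e·b). -/
/-- Under the semilattice-of-groups hypotheses, for every idempotent e of S and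
all a,b: ea = (αa)e and e(ab) = (ea)(eb). -/
theorem stmt_14 {S : Type*}
(star : S → S → S) (α : S → S)
    (hassoc : ∀ x y z, star (star x y) z = star x (star y z))
    (hCR : ∀ a, ∃ x, star (star a x) a = a ∧ star a x = star x a)
    (hcentral : ∀ e, star e e = e → ∀ x, star e x = star x e)
    (hinv : ∀ x, α (α x) = x)
    (hhom : ∀ x y, α (star x y) = star (α x) (α y))
    (hfix : ∀ e, star e e = e → α e = e)
    (mul : S → S → S)
    (hmul : ∀ x y, mul x y = star (α x) y) :
    ∀ e, mul e e = e → ∀ a b,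
      mul e a = mul (α a) e ∧ mul e (mul a b) = mul (mul e a) (mul e b) := by
  intro e he a b
  rw [hmul] at he
  -- he : star (α e) e = e
  have he' : star e (α e) = α e := by
    have := congrArg α he
    rw [hhom, hinv] at this
    exact this
  have hidem : star e e = e := by
    calc star e e = star e (star (α e) e) := by rw [he]
      _ = star (star e (α e)) e := (hassoc _ _ _).symm
      _ = star (α e) e := by rw [he']
      _ = e := he
  have hae : α e = e := hfix e hidem
  have hcent := hcentral e hidem
  constructor
  · rw [hmul, hmul, hae, hinv, hcent]
  · simp only [hmul, hae, hhom, hinv]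
    calc star e (star (α a) b)
        = star (star e e) (star (α a) b) := by rw [hidem]
      _ = star e (star e (star (α a) b)) := hassoc _ _ _
      _ = star e (star (star e (α a)) b) := by rw [hassoc]
      _ = star e (star (star (α a) e) b) := by rw [hcent (α a)]
      _ = star e (star (α a) (star e b)) := by rw [hassoc]
      _ = star (star e (α a)) (star e b) := (hassoc _ _ _).symm
end

section
/- If a magma S has multiplication x·y = (αx)*y where (S,*) is a semilattice of groups and α is an involutive idempotent-fixed automorphism of (S,*), then (a·b)·(a·b)⁻¹ = (a·a⁻¹)·(b·b⁻¹) for all a,b in S. -/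
/-- Under the semilattice-of-groups hypotheses, (ab)(ab)⁻¹ = (aa⁻¹)(bb⁻¹). -/
theorem stmt_15 {S : Type*}
(star : S → S → S) (α : S → S)
    (hassoc : ∀ x y z, star (star x y) z = star x (star y z))
    (hCR : ∀ a, ∃ x, star (star a x) a = a ∧ star a x = star x a)
    (hcentral : ∀ e, star e e = e → ∀ x, star e x = star x e)
    (hinv : ∀ x, α (α x) = x)
    (hhom : ∀ x y, α (star x y) = star (α x) (α y))
    (hfix : ∀ e, star e e = e → α e = e)
    (mul : S → S → S)
    (hmul : ∀ x y, mul x y = star (α x) y)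
(inv : S → S)
    (hinvp : ∀ a, mul (mul a (inv a)) a = a ∧ mul (mul (inv a) a) (inv a) = inv a)
    (huniq : ∀ a b, mul (mul a b) a = a → mul (mul b a) b = b → b = inv a) :
    ∀ a b, mul (mul a b) (inv (mul a b)) =
      mul (mul a (inv a)) (mul b (inv b)) := by
  -- weak-inverse products are idempotent
  have eidem : ∀ u v, star (star u v) u = u →
      star (star u v) (star u v) = star u v := by
    intro u v h
    rw [← hassoc, h]
  -- product of two idempotents is idempotent (using centrality)
  have pidem : ∀ e f, star e e = e → star f f = f →
      star (star e f) (star e f) = star e f := by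
    intro e f he hf
    rw [hassoc e f (star e f), ← hassoc f e f, hcentral f hf e,
      hassoc e f f, hf, ← hassoc e e f, he]
  -- inv u = α c for any weak inverse c of u
  have key : ∀ u c, star (star u c) u = u → star (star c u) c = c →
      inv u = α c := by
    intro u c h1 h2
    refine (huniq u (α c) ?_ ?_).symm
    · simp only [hmul]
      rw [← hhom, hinv, h1]
    · simp only [hmul, hinv]
      rw [← hhom, h2]
  -- every element has a commuting weak inverse
  have getinv : ∀ u, ∃ c, star (star u c) u = u ∧ star (star c u) c = c ∧
      star u c = star c u := by
    intro u
    obtain ⟨v, h1, h2⟩ := hCR u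
    have hvu : star (star v u) (star v u) = star v u := by
      rw [hassoc, ← hassoc u v u, h1]
    refine ⟨star (star v u) v, ?_, ?_, ?_⟩
    · rw [← hassoc, ← hassoc, h1, h1]
    · rw [hassoc (star v u) v u, hvu, ← hassoc, hvu]
    · have hl : star u (star (star v u) v) = star u v := by
        rw [← hassoc, ← hassoc, h1]
      have hr : star (star (star v u) v) u = star v u := by
        rw [hassoc (star v u) v u, hvu]
      rw [hl, hr]
      exact h2
  intro a b
  obtain ⟨ca, ha1, ha2, ha3⟩ := getinv a
  obtain ⟨cb, hb1, hb2, hb3⟩ := getinv b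
  -- transported facts for α a and α ca
  have hx1 : star (star (α a) (α ca)) (α a) = α a := by
    rw [← hhom, ← hhom, ha1]
  have hx2 : star (star (α ca) (α a)) (α ca) = α ca := by
    rw [← hhom, ← hhom, ha2]
  -- idempotents
  have hea : star (star a ca) (star a ca) = star a ca := eidem a ca ha1
  have heb : star (star b cb) (star b cb) = star b cb := eidem b cb hb1
  have hr : star (star (α ca) (α a)) (star (α ca) (α a)) = star (α ca) (α a) :=
    eidem (α ca) (α a) hx2
  -- weak inverse of (α a) * b is cb * (α ca)
  have claimA : star (star (star (α a) b) (star cb (α ca))) (star (α a) b)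
      = star (α a) b := by
    rw [hassoc (star (α a) b) (star cb (α ca)) (star (α a) b),
      hassoc cb (α ca) (star (α a) b),
      ← hassoc (α ca) (α a) b,
      hcentral (star (α ca) (α a)) hr b,
      ← hassoc cb b (star (α ca) (α a)),
      hassoc (α a) b (star (star cb b) (star (α ca) (α a))),
      ← hassoc b (star cb b) (star (α ca) (α a)),
      ← hassoc b cb b, hb1,
      ← hcentral (star (α ca) (α a)) hr b,
      ← hassoc (α a) (star (α ca) (α a)) b,
      ← hassoc (α a) (α ca) (α a), hx1]
  have claimB : star (star (star cb (α ca)) (star (α a) b)) (star cb (α ca))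
      = star cb (α ca) := by
    rw [hassoc (star cb (α ca)) (star (α a) b) (star cb (α ca)),
      hassoc (α a) b (star cb (α ca)),
      ← hassoc b cb (α ca),
      hcentral (star b cb) heb (α ca),
      ← hassoc (α a) (α ca) (star b cb),
      hassoc cb (α ca) (star (star (α a) (α ca)) (star b cb)),
      ← hassoc (α ca) (star (α a) (α ca)) (star b cb),
      ← hassoc (α ca) (α a) (α ca), hx2,
      ← hcentral (star b cb) heb (α ca),
      ← hassoc cb (star b cb) (α ca),
      ← hassoc cb b cb, hb2]
  have hip : inv (star (α a) b) = α (star cb (α ca)) :=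
    key (star (α a) b) (star cb (α ca)) claimA claimB
  -- the product (α a * b) * (cb * α ca) equals (a*ca)*(b*cb)
  have hpc : star (star (α a) b) (star cb (α ca))
      = star (star a ca) (star b cb) := by
    rw [hassoc (α a) b (star cb (α ca)),
      ← hassoc b cb (α ca),
      hcentral (star b cb) heb (α ca),
      ← hassoc (α a) (α ca) (star b cb),
      ← hhom a ca, hfix (star a ca) hea]
  simp only [hmul]
  rw [key a ca ha1 ha2, key b cb hb1 hb2, hip,
    ← hhom (star (α a) b) (star cb (α ca)), hpc,
    hfix _ (pidem _ _ hea heb),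
    ← hhom a ca, hinv, ← hhom b cb, hfix _ heb]
end

section
/- Let S be an inverse right-Bol magma with an involutive idempotent-fixed automorphism α such that (a·b)⁻¹ = (αb⁻¹)·(αa⁻¹) for all a,b in S. Then the set of idempotents E(S) is a semilattice: for idempotents e, f, g one has e·f = f·e, e·f is idempotent, and (e·f)·g = e·(f·g). -/
/-- If S is an inverse right-Bol magma with an involutive idempotent-fixed
automorphism α satisfying (ab)⁻¹ = (αb⁻¹)(αa⁻¹), then E(S) is a semilattice. -/
theorem stmt_16 {S : Type*} (mul : S → S → S) (inv : S → S) (α : S → S)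
    (hinvp : ∀ a, mul (mul a (inv a)) a = a ∧ mul (mul (inv a) a) (inv a) = inv a)
    (huniq : ∀ a b, mul (mul a b) a = a → mul (mul b a) b = b → b = inv a)
    (hBol : ∀ x y z w, mul (mul (mul x y) z) w = mul x (mul (mul y z) w))
    (hinv : ∀ x, α (α x) = x)
    (hhom : ∀ x y, α (mul x y) = mul (α x) (α y))
    (hfix : ∀ e, mul e e = e → α e = e)
    (hanti : ∀ a b, inv (mul a b) = mul (α (inv b)) (α (inv a))) :
    ∀ e f g, mul e e = e → mul f f = f → mul g g = g →
      mul e f = mul f e ∧ mul (mul e f) (mul e f) = mul e f ∧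
      mul (mul e f) g = mul e (mul f g) := by
  have invA : ∀ a, mul a a = a → inv a = a := fun a ha =>
    (huniq a a (by rw [ha]; exact ha) (by rw [ha]; exact ha)).symm
  have invinv : ∀ a, inv (inv a) = a := fun a =>
    (huniq (inv a) a (hinvp a).2 (hinvp a).1).symm
  have hinj : ∀ a b, inv a = inv b → a = b := fun a b h => by
    rw [← invinv a, h, invinv b]
  intro e f g he hf hg
  have ae := hfix e he
  have af := hfix f hf
  have ie := invA e he
  have if' := invA f hf
  have hef : inv (mul e f) = mul f e := by rw [hanti, ie, if', ae, af]
  have hfe : inv (mul f e) = mul e f := by rw [hanti, ie, if', ae, af]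
  have aef : α (mul e f) = mul e f := by rw [hhom, ae, af]
  have afe : α (mul f e) = mul f e := by rw [hhom, ae, af]
  -- p := (ef)(fe), q := (fe)(ef)
  have ip : inv (mul (mul e f) (mul f e)) = mul (mul e f) (mul f e) := by
    rw [hanti, hfe, hef, aef, afe]
  have iq : inv (mul (mul f e) (mul e f)) = mul (mul f e) (mul e f) := by
    rw [hanti, hef, hfe, afe, aef]
  have ap : α (mul (mul e f) (mul f e)) = mul (mul e f) (mul f e) := by
    rw [hhom, aef, afe]
  have aq : α (mul (mul f e) (mul e f)) = mul (mul f e) (mul e f) := by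
    rw [hhom, afe, aef]
  have D1 := (hinvp (mul e f)).1
  rw [hef] at D1
  -- D1 : ((ef)(fe))(ef) = ef
  have D2 := (hinvp (mul e f)).2
  rw [hef] at D2
  -- D2 : ((fe)(ef))(fe) = fe
  have E1 : mul (mul f e) (mul (mul e f) (mul f e)) = mul f e := by
    have h := congrArg inv D1
    rw [hanti, hef, ip, afe, ap] at h
    exact h
  have E2 : mul (mul e f) (mul (mul f e) (mul e f)) = mul e f := by
    have h := congrArg inv D2
    rw [hanti, hfe, iq, aef, aq] at h
    exact h
  have F1 : mul f (mul f e) = mul f e := by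
    have h := hBol f f e (mul (mul e f) (mul f e))
    rw [hf, E1] at h
    exact h.symm
  have F2 : mul e (mul e f) = mul e f := by
    have h := hBol e e f (mul (mul f e) (mul e f))
    rw [he, E2] at h
    exact h.symm
  have G1 : mul (mul e f) f = mul e f := by
    refine hinj _ _ ?_
    rw [hanti, if', af, hef, afe]
    exact F1
  have G2 : mul (mul f e) e = mul f e := by
    refine hinj _ _ ?_
    rw [hanti, ie, ae, hfe, aef]
    exact F2
  have H : ∀ w, mul (mul e f) w = mul e (mul f w) := by
    intro w
    have h := hBol e f f w
    rw [G1, hf] at h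
    exact h
  have H' : ∀ w, mul (mul f e) w = mul f (mul e w) := by
    intro w
    have h := hBol f e e w
    rw [G2, he] at h
    exact h
  have fq : mul (mul f e) (mul e f) = mul f (mul (mul f e) (mul e f)) := by
    have h := hBol f f e (mul e f)
    rw [hf] at h
    exact h
  have eq1 : mul e (mul (mul f e) (mul e f)) = mul e f := by
    rw [fq, ← H]
    exact E2
  have fef : mul f (mul e f) = mul (mul f e) (mul e f) := by
    rw [H', F2]
  have idem : mul (mul e f) (mul e f) = mul e f := by
    rw [H, fef]
    exact eq1
  have comm : mul e f = mul f e := by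
    rw [← hef, invA _ idem]
  exact ⟨comm, idem, H g⟩
end

section
/- Let S be an inverse magma with a·a⁻¹ idempotent for all a, and let α be an involutive automorphism of S such that (a·b)·c = (αa)·(b·c) for all a,b,c. Then α fixes every idempotent of S, and αa = a·(a⁻¹·a) for all a in S. -/
/-- If S is an inverse magma with aa⁻¹ idempotent for all a and α is an involutive
automorphism with (ab)c = (αa)(bc), then α fixes every idempotent and
αa = a(a⁻¹a) for all a. -/
theorem stmt_17 {S : Type*} (mul : S → S → S) (inv : S → S) (α : S → S)
    (hinvp : ∀ a, mul (mul a (inv a)) a = a ∧ mul (mul (inv a) a) (inv a) = inv a)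
    (huniq : ∀ a b, mul (mul a b) a = a → mul (mul b a) b = b → b = inv a)
    (hidem : ∀ a, mul (mul a (inv a)) (mul a (inv a)) = mul a (inv a))
    (hinvo : ∀ x, α (α x) = x)
    (hhom : ∀ x y, α (mul x y) = mul (α x) (α y))
    (h1 : ∀ a b c, mul (mul a b) c = mul (α a) (mul b c)) :
    (∀ e, mul e e = e → α e = e) ∧
      (∀ a, α a = mul a (mul (inv a) a)) := by
  have hfix : ∀ e, mul e e = e → α e = e := by
    intro e he
    -- e = (αe)e
    have h2 : e = mul (α e) e := by
      have := h1 e e e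
      rw [he, he] at this
      exact this
    -- αe = e(αe)
    have h3 : α e = mul e (α e) := by
      conv_lhs => rw [h2]
      rw [hhom, hinvo]
    -- e = inv e
    have h4 : e = inv e := huniq e e (by rw [he, he]) (by rw [he, he])
    -- αe = inv e
    have h5 : α e = inv e := by
      apply huniq
      · rw [h1, ← h2, ← h2]
      · rw [h1, hinvo, ← h3, ← h3]
    rw [h5, ← h4]
  refine ⟨hfix, fun a => ?_⟩
  -- inv (inv a) = a
  have hii : a = inv (inv a) := huniq (inv a) a (hinvp a).2 (hinvp a).1
  -- a⁻¹ a is idempotent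
  have hidem2 : mul (mul (inv a) a) (mul (inv a) a) = mul (inv a) a := by
    have := hidem (inv a)
    rw [← hii] at this
    exact this
  have hfix2 : α (mul (inv a) a) = mul (inv a) a := hfix _ hidem2
  -- a = (αa)(a⁻¹a)
  have h6 : a = mul (α a) (mul (inv a) a) := by
    have := h1 a (inv a) a
    rw [(hinvp a).1] at this
    exact this
  -- apply α
  calc α a = α (mul (α a) (mul (inv a) a)) := by rw [← h6]
    _ = mul a (mul (inv a) a) := by rw [hhom, hinvo, hfix2]
end

section
/- Let S be a strongly regular magma whose idempotents form a semilattice, and suppose there is an involutive idempotent-fixed automorphism α of S with (x·y)·z = (αx)·(y·z) for all x,y,z. Then S is a completely inverse magma: every element a has a unique inverse a⁻¹ with a·a⁻¹ = a⁻¹·a idempotent. -/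
namespace Stmt18Aux

variable {S : Type*}

/-- Auxiliary associative operation `u ∘ v = (α u) · v`. -/
def op (mul : S → S → S) (α : S → S) (u v : S) : S := mul (α u) v

section
variable (mul : S → S → S) (α : S → S)
variable (hinv : ∀ x, α (α x) = x)
variable (hhom : ∀ x y, α (mul x y) = mul (α x) (α y))
variable (h1 : ∀ x y z, mul (mul x y) z = mul (α x) (mul y z))

include hinv hhom h1

lemma op_assoc (u v w : S) :
    op mul α (op mul α u v) w = op mul α u (op mul α v w) := by
  show mul (α (mul (α u) v)) w = mul (α u) (mul (α v) w)
  rw [hhom, hinv, h1]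

lemma alpha_op (u v : S) : α (op mul α u v) = op mul α (α u) (α v) := by
  show α (mul (α u) v) = mul (α (α u)) (α v)
  rw [hhom]

/-- Every `op`-idempotent is a `mul`-idempotent. -/
lemma op_idem_mul
    (hSR : ∀ a, ∃ x, mul (mul a x) a = a ∧ mul a x = mul x a ∧
      mul (mul a x) (mul a x) = mul a x)
    (hfix : ∀ e, mul e e = e → α e = e)
    (g : S) (hg : op mul α g g = g) : mul g g = g := by
  have hg' : mul (α g) g = g := hg
  obtain ⟨y, hy1, hy2, hy3⟩ := hSR g
  have hmg : mul (mul g y) g = g := hy1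
  have hgm : mul g (mul g y) = mul g y := by
    have h := h1 (α g) g y
    rw [hinv, hg'] at h
    exact h.symm
  have hαm : α (mul g y) = mul g y := hfix _ hy3
  have hfm : mul (α g) (mul g y) = mul g y := by
    have h := congrArg α hgm
    rw [hhom, hαm] at h
    exact h
  have h := h1 (α g) (mul g y) g
  rw [hinv, hfm, hmg] at h
  exact h.symm

/-- `op`-idempotents commute. -/
lemma op_commE
    (hEcomm : ∀ e f, mul e e = e → mul f f = f → mul e f = mul f e)
    (hSR : ∀ a, ∃ x, mul (mul a x) a = a ∧ mul a x = mul x a ∧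
      mul (mul a x) (mul a x) = mul a x)
    (hfix : ∀ e, mul e e = e → α e = e)
    (g h : S) (hg : op mul α g g = g) (hh : op mul α h h = h) :
    op mul α g h = op mul α h g := by
  have hg2 := op_idem_mul mul α hinv hhom h1 hSR hfix g hg
  have hh2 := op_idem_mul mul α hinv hhom h1 hSR hfix h hh
  show mul (α g) h = mul (α h) g
  rw [hfix g hg2, hfix h hh2, hEcomm g h hg2 hh2]

lemma inv_left (a c : S) (hc : mul (mul a c) a = a) :
    op mul α (op mul α a (α c)) a = a := by
  show mul (α (mul (α a) (α c))) a = a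
  rw [← hhom, hinv]
  exact hc

lemma inv_right (a c : S) (hc : mul (mul c a) c = c) :
    op mul α (op mul α (α c) a) (α c) = α c := by
  have step : op mul α (op mul α c (α a)) c = c := by
    show mul (α (mul (α c) (α a))) c = c
    rw [← hhom, hinv]
    exact hc
  have h := congrArg α step
  rw [alpha_op mul α hinv hhom h1, alpha_op mul α hinv hhom h1, hinv] at h
  exact h

end

end Stmt18Aux

open Stmt18Aux in
/-- If S is a strongly regular magma whose idempotents form a semilattice, and
α is an involutive idempotent-fixed automorphism with (xy)z = (αx)(yz), then S
is a completely inverse magma. -/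
theorem stmt_18 {S : Type*} (mul : S → S → S) (α : S → S)
    (hSR : ∀ a, ∃ x, mul (mul a x) a = a ∧ mul a x = mul x a ∧
      mul (mul a x) (mul a x) = mul a x)
    (hEcomm : ∀ e f, mul e e = e → mul f f = f → mul e f = mul f e)
    (hEclosed : ∀ e f, mul e e = e → mul f f = f → mul (mul e f) (mul e f) = mul e f)
    (hEassoc : ∀ e f g, mul e e = e → mul f f = f → mul g g = g →
      mul (mul e f) g = mul e (mul f g))
    (hinv : ∀ x, α (α x) = x)
    (hhom : ∀ x y, α (mul x y) = mul (α x) (α y))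
    (hfix : ∀ e, mul e e = e → α e = e)
    (h1 : ∀ x y z, mul (mul x y) z = mul (α x) (mul y z)) :
    ∀ a : S, ∃ b : S,
      (mul (mul a b) a = a ∧ mul (mul b a) b = b) ∧
      (∀ c, mul (mul a c) a = a → mul (mul c a) c = c → c = b) ∧
      mul a b = mul b a ∧ mul (mul a b) (mul a b) = mul a b := by
  intro a
  obtain ⟨x, hxa, hcom, hid⟩ := hSR a
  set e := mul a x with he
  have hαe : α e = e := hfix e hid
  have hxae : mul x a = e := hcom.symm
  have haαe : mul (α a) e = a := by
    have h := h1 a x a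
    rw [hxae, ← he, hxa] at h
    exact h.symm
  have hab : mul a (mul e x) = e := by
    have h := h1 (α a) e x
    rw [hinv, haαe, ← he] at h
    exact h.symm
  have hba : mul (mul e x) a = e := by
    have h := h1 e x a
    rw [hαe, hxae, hid] at h
    exact h
  have heb : mul e (mul e x) = mul e x := by
    have h := h1 (α e) e x
    rw [hinv, hαe, hid] at h
    exact h.symm
  have cb1 : mul (mul a (mul e x)) a = a := by rw [hab]; exact hxa
  have cb2 : mul (mul (mul e x) a) (mul e x) = mul e x := by rw [hba]; exact heb
  -- abbreviation for op
  set O : S → S → S := op mul α with hO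
  have A : ∀ u v w, O (O u v) w = O u (O v w) := op_assoc mul α hinv hhom h1
  have AC : ∀ g h, O g g = g → O h h = h → O g h = O h g :=
    op_commE mul α hinv hhom h1 hEcomm hSR hfix
  have T1 : ∀ c : S, mul (mul a c) a = a → O (O a (α c)) a = a :=
    fun c hc => inv_left mul α hinv hhom h1 a c hc
  have T2 : ∀ c : S, mul (mul c a) c = c → O (O (α c) a) (α c) = α c :=
    fun c hc => inv_right mul α hinv hhom h1 a c hc
  -- uniqueness: any two inverses of a coincide
  have key : ∀ u v : S, mul (mul a u) a = a → mul (mul u a) u = u →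
      mul (mul a v) a = a → mul (mul v a) v = v → u = v := by
    intro u v hu1 hu2 hv1 hv2
    have Ku := T1 u hu1
    have Mu := T2 u hu2
    have Kv := T1 v hv1
    have Mv := T2 v hv2
    have Kur : O a (O (α u) a) = a := by rw [← A]; exact Ku
    have Kvr : O a (O (α v) a) = a := by rw [← A]; exact Kv
    have Mur : O (α u) (O a (α u)) = α u := by rw [← A]; exact Mu
    have Mvr : O (α v) (O a (α v)) = α v := by rw [← A]; exact Mv
    have ik1 : O (O a (α u)) (O a (α u)) = O a (α u) := by rw [A, Mur]
    have ik2 : O (O a (α v)) (O a (α v)) = O a (α v) := by rw [A, Mvr]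
    have im1 : O (O (α u) a) (O (α u) a) = O (α u) a := by rw [A, Kur]
    have im2 : O (O (α v) a) (O (α v) a) = O (α v) a := by rw [A, Kvr]
    have ck : O (O a (α u)) (O a (α v)) = O (O a (α v)) (O a (α u)) :=
      AC _ _ ik1 ik2
    have cm : O (O (α u) a) (O (α v) a) = O (O (α v) a) (O (α u) a) :=
      AC _ _ im1 im2
    have hm1 : O (α u) a = O (O (α v) a) (O (α u) a) := by
      conv_lhs => rw [← Kvr]
      rw [← A]
      exact cm
    have hm2 : O (α v) a = O (O (α u) a) (O (α v) a) := by
      conv_lhs => rw [← Kur]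
      rw [← A]
      exact cm.symm
    have s1 : α u = O (α v) (O a (α u)) := by
      conv_lhs => rw [← Mu]
      rw [hm1, A, Mu, A]
    have s2 : α v = O (α u) (O a (α v)) := by
      conv_lhs => rw [← Mv]
      rw [hm2, A, Mv, A]
    have final : α u = α v := by
      calc α u = O (α v) (O a (α u)) := s1
        _ = O (O (α u) (O a (α v))) (O a (α u)) := by conv_lhs => rw [s2]
        _ = O (α u) (O (O a (α v)) (O a (α u))) := A _ _ _
        _ = O (α u) (O (O a (α u)) (O a (α v))) := by rw [← ck]
        _ = O (O (α u) (O a (α u))) (O a (α v)) := (A _ _ _).symm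
        _ = O (α u) (O a (α v)) := by rw [Mur]
        _ = α v := s2.symm
    have h := congrArg α final
    rw [hinv, hinv] at h
    exact h
  refine ⟨mul e x, ⟨cb1, cb2⟩, ?_, ?_, ?_⟩
  · intro c hc1 hc2
    exact key c (mul e x) hc1 hc2 cb1 cb2
  · rw [hab, hba]
  · rw [hab]; exact hid
end

section
/- Let S be an inverse magma (with unique inverses) whose multiplication is x·y = (αx)*y for a semigroup (S,*) and involutive automorphism α of (S,*), and suppose a·a⁻¹ is idempotent for all a. Then α fixes all idempotents of S if and only if αa = a·(a⁻¹·a) for all a in S. -/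
/-- Let S be an inverse magma with x·y = (αx)*y for a semigroup (S,*) and
involutive automorphism α of (S,*), with aa⁻¹ idempotent for all a. Then α fixes
all idempotents of S iff αa = a(a⁻¹a) for all a. -/
theorem stmt_19 {S : Type*} (star : S → S → S) (α : S → S)
    (hassoc : ∀ x y z, star (star x y) z = star x (star y z))
    (hinvo : ∀ x, α (α x) = x)
    (hhom : ∀ x y, α (star x y) = star (α x) (α y))
    (mul : S → S → S)
    (hmul : ∀ x y, mul x y = star (α x) y)
    (inv : S → S)
    (hinvp : ∀ a, mul (mul a (inv a)) a = a ∧ mul (mul (inv a) a) (inv a) = inv a)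
    (huniq : ∀ a b, mul (mul a b) a = a → mul (mul b a) b = b → b = inv a)
    (hidem : ∀ a, mul (mul a (inv a)) (mul a (inv a)) = mul a (inv a)) :
    (∀ e, mul e e = e → α e = e) ↔ (∀ a, α a = mul a (mul (inv a) a)) := by
  constructor
  · intro hfix a
    set b := inv a with hb
    have hainvb : a = inv b := huniq b a (hinvp a).2 (hinvp a).1
    have e2 : α (mul b a) = mul b a := by
      have h := hidem b
      rw [← hainvb] at h
      exact hfix _ h
    have key : star b (α a) = star (α b) a := by
      rw [hmul] at e2
      rw [hhom, hinvo] at e2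
      exact e2
    have h1 : star (star a (α b)) a = a := by
      have h := (hinvp a).1
      simp only [hmul, hhom, hinvo] at h
      exact h
    have h1' : star (star (α a) b) (α a) = α a := by
      have h := congrArg α h1
      simp only [hhom, hinvo] at h
      exact h
    simp only [hmul]
    calc α a = star (star (α a) b) (α a) := h1'.symm
      _ = star (α a) (star b (α a)) := hassoc _ _ _
      _ = star (α a) (star (α b) a) := by rw [key]
  · intro h e he
    have heinv : e = inv e := huniq e e (by rw [he]; exact he) (by rw [he]; exact he)
    have h2 := h e
    rw [← heinv, he, he] at h2
    exact h2
end
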